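/- arXiv:1312.3194 — 2 statements merged into one kernel-verified Lean document; each statement's English description precedes it below -/
import Mathlib

section
/- Let K be a finite field with q^m elements, let g_1, …, g_N ∈ K be linearly independent over F_q (so m ≥ N), let 1 ≤ M ≤ N, and let f be a nonzero linearized polynomial over K of q-degree at most M − 1. Then rank_{F_q}((f(g_1), …, f(g_N))) ≥ N − M + 1. Consequently, the Gabidulin code {(f(g_1), …, f(g_N)) : f a linearized polynomial of q-degree at most M − 1} has minimum rank distance at least N − M + 1. -/
/-- The subfield `F_q = {a ∈ K : a ^ q = a}` of a field `K` of characteristic `p`,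
where `q = p ^ e`. -/
def Fqsub (p e : ℕ) (K : Type*) [Field K] [Fact p.Prime] [CharP K p] : Subfield K where
  carrier := {x : K | x ^ p ^ e = x}
  mul_mem' := by
    intro a b ha hb
    simp only [Set.mem_setOf_eq] at *
    rw [mul_pow, ha, hb]
  one_mem' := by simp
  add_mem' := by
    intro a b ha hb
    haveI : ExpChar K p := ExpChar.prime Fact.out
    simp only [Set.mem_setOf_eq] at *
    rw [add_pow_expChar_pow, ha, hb]
  zero_mem' := by
    simp only [Set.mem_setOf_eq]
    exact zero_pow (pow_ne_zero _ (Nat.Prime.ne_zero Fact.out))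
  neg_mem' := by
    intro a ha
    haveI : ExpChar K p := ExpChar.prime Fact.out
    simp only [Set.mem_setOf_eq] at *
    calc (-a) ^ p ^ e = (0 - a) ^ p ^ e := by rw [zero_sub]
    _ = 0 ^ p ^ e - a ^ p ^ e := sub_pow_expChar_pow 0 a e
    _ = -a := by
        rw [ha, zero_pow (pow_ne_zero _ (Nat.Prime.ne_zero (Fact.out : p.Prime))), zero_sub]
  inv_mem' := by
    intro x hx
    simp only [Set.mem_setOf_eq] at *
    rw [inv_pow, hx]

/-- The rank over `F_q` of a vector `v ∈ K^N`: the dimension over `F_q` of the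
`F_q`-linear span of its coordinates. -/
noncomputable def rankFq (p e : ℕ) (K : Type*) [Field K] [Fact p.Prime] [CharP K p]
    {N : ℕ} (v : Fin N → K) : ℕ :=
  Module.finrank (Fqsub p e K) (Submodule.span (Fqsub p e K) (Set.range v))

/-! The map `x ↦ ∑ aⱼ x^(q^j)` is `F_q`-linear, and its kernel consists of roots of a nonzero
polynomial of degree at most `q^(M-1)`. Since `F_q` has exactly `q` elements (the roots of
`X^q - X`, a divisor of `X^(q^m) - X = ∏_{x ∈ K} (X - x)`), the kernel has `F_q`-dimension at
most `M - 1`, and rank–nullity on the span of the `gᵢ` gives rank at least `N - (M - 1)`.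
Linearity in the coefficients turns differences of codewords into codewords. -/

open Polynomial Module Submodule

theorem card_le_finrank_span_range_comp_add_finrank_ker {F V V' ι : Type*} [Field F]
    [AddCommGroup V] [Module F V] [FiniteDimensional F V] [AddCommGroup V'] [Module F V']
    [Fintype ι] (φ : V →ₗ[F] V') {g : ι → V} (hg : LinearIndependent F g) :
    Fintype.card ι ≤
      finrank F (span F (Set.range (φ ∘ g))) + finrank F (LinearMap.ker φ) := by
  set W := span F (Set.range g)
  have hW : finrank F W = Fintype.card ι := finrank_span_eq_card hg
  have hrange : LinearMap.range (φ.domRestrict W) = span F (Set.range (φ ∘ g)) := by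
    rw [LinearMap.range_domRestrict, Set.range_comp, span_image]
  have hker : finrank F (LinearMap.ker (φ.domRestrict W)) ≤ finrank F (LinearMap.ker φ) :=
    LinearMap.finrank_le_finrank_of_injective (f := W.subtype.restrict fun _ hx => hx)
      fun _ _ h => Subtype.ext <| Subtype.ext (congrArg (fun z : LinearMap.ker φ => (z : V)) h)
  have := (φ.domRestrict W).finrank_range_add_finrank_ker
  rw [hrange, hW] at this
  omega

theorem finrank_le_of_natCard_le {F V : Type*} [Field F] [AddCommGroup V] [Module F V]
    [Module.Finite F V] {q k : ℕ} (hq : 1 < q) (hF : q ≤ Nat.card F)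
    (hV : Nat.card V ≤ q ^ k) :
    finrank F V ≤ k := by
  refine (Nat.pow_le_pow_iff_right hq).mp ?_
  calc q ^ finrank F V ≤ Nat.card F ^ finrank F V := Nat.pow_le_pow_left hF _
    _ = Nat.card V := natCard_eq_pow_finrank.symm
    _ ≤ q ^ k := hV

section LinearizedPolynomial

variable {K : Type*} [CommRing K] (q : ℕ) {M : ℕ} (a : Fin M → K)

noncomputable def linearizedPoly : K[X] := ∑ j, C (a j) * X ^ q ^ (j : ℕ)

theorem eval_linearizedPoly (x : K) :
    (linearizedPoly q a).eval x = ∑ j, a j * x ^ q ^ (j : ℕ) := by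
  simp [linearizedPoly, eval_finsetSum]

variable {q}

theorem coeff_linearizedPoly_pow (hq : 1 < q) (j : Fin M) :
    (linearizedPoly q a).coeff (q ^ (j : ℕ)) = a j := by
  rw [linearizedPoly, finsetSum_coeff, Finset.sum_eq_single j]
  · simp
  · intro i _ hij
    rw [coeff_C_mul_X_pow, if_neg fun h => hij (Fin.ext (Nat.pow_right_injective hq h).symm)]
  · simp

theorem linearizedPoly_ne_zero (hq : 1 < q) {a : Fin M → K} (ha : a ≠ 0) :
    linearizedPoly q a ≠ 0 := by
  obtain ⟨j, hj⟩ := Function.ne_iff.mp ha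
  intro h
  exact hj (by simpa [h] using (coeff_linearizedPoly_pow a hq j).symm)

theorem natDegree_linearizedPoly_le (hq : 0 < q) :
    (linearizedPoly q a).natDegree ≤ q ^ (M - 1) := by
  refine natDegree_sum_le_of_forall_le _ _ fun j _ => (natDegree_C_mul_X_pow_le _ _).trans ?_
  exact Nat.pow_le_pow_right hq (by omega)

end LinearizedPolynomial

theorem X_pow_sub_X_dvd_X_pow_pow_sub_X {R : Type*} [CommRing R] {q : ℕ} (hq : 0 < q) (m : ℕ) :
    (X ^ q - X : R[X]) ∣ X ^ q ^ m - X := by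
  have factor : ∀ n, 0 < n → (X ^ n - X : R[X]) = X * (X ^ (n - 1) - 1) := fun n hn => by
    rw [mul_sub, ← pow_succ', Nat.sub_add_cancel hn, mul_one]
  rw [factor q hq, factor _ (pow_pos hq m)]
  exact mul_dvd_mul_left X
    (dvd_pow_sub_one_of_dvd (by simpa using Nat.sub_one_dvd_pow_sub_one q m))

section Fqsub

variable {p e : ℕ} [Fact p.Prime] {K : Type*} [Field K] [CharP K p]

theorem pow_pow_pow_eq_self_of_mem_Fqsub {c : K} (hc : c ∈ Fqsub p e K) (j : ℕ) :
    c ^ (p ^ e) ^ j = c := by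
  induction j with
  | zero => simp
  | succ j ih => rw [pow_succ, pow_mul, ih]; exact hc

variable (p e) in
noncomputable def linearizedMap {M : ℕ} (a : Fin M → K) : K →ₗ[Fqsub p e K] K where
  toFun x := ∑ j, a j * x ^ (p ^ e) ^ (j : ℕ)
  map_add' x y := by
    simp only [← pow_mul, add_pow_expChar_pow, mul_add, Finset.sum_add_distrib]
  map_smul' c x := by
    simp only [Subfield.smul_def, smul_eq_mul, mul_pow, pow_pow_pow_eq_self_of_mem_Fqsub c.2,
      Finset.mul_sum, RingHom.id_apply]
    exact Finset.sum_congr rfl fun j _ => by ring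

theorem linearizedMap_eq_eval {M : ℕ} (a : Fin M → K) (x : K) :
    linearizedMap p e a x = (linearizedPoly (p ^ e) a).eval x :=
  (eval_linearizedPoly _ a x).symm

theorem linearizedMap_sub {M : ℕ} (a a' : Fin M → K) :
    linearizedMap p e (a - a') = linearizedMap p e a - linearizedMap p e a' := by
  ext x
  simp [linearizedMap, sub_mul]

theorem card_Fqsub [Fintype K] (he : 1 ≤ e) {m : ℕ} (hcard : Fintype.card K = (p ^ e) ^ m) :
    Nat.card (Fqsub p e K) = p ^ e := by
  have hq : 1 < p ^ e := Nat.one_lt_pow (by omega) (Fact.out : p.Prime).one_lt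
  set Q : K[X] := X ^ p ^ e - X
  have hQ : (Fqsub p e K : Set K) = Q.rootSet K := by
    ext x
    rw [mem_rootSet_of_ne (FiniteField.X_pow_card_sub_X_ne_zero K hq)]
    simp [Fqsub, sub_eq_zero]
  have hsplit : Splits (X ^ Fintype.card K - X : K[X]) := by
    rw [splits_iff_card_roots, FiniteField.roots_X_pow_card_sub_X,
      FiniteField.X_pow_card_sub_X_natDegree_eq K Fintype.one_lt_card]
    rfl
  have hQsplit : Splits Q :=
    hsplit.of_dvd (FiniteField.X_pow_card_sub_X_ne_zero K Fintype.one_lt_card)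
      (hcard ▸ X_pow_sub_X_dvd_X_pow_pow_sub_X (by omega) m)
  calc Nat.card (Fqsub p e K) = Nat.card (Q.rootSet K) := by rw [← hQ]; rfl
    _ = Q.natDegree := by
      rw [Nat.card_eq_fintype_card]
      exact card_rootSet_eq_natDegree (galois_poly_separable p _ (dvd_pow_self p (by omega)))
        (by simpa using hQsplit)
    _ = p ^ e := FiniteField.X_pow_card_sub_X_natDegree_eq K hq

theorem card_ker_linearizedMap_le (he : 1 ≤ e) {M : ℕ} {a : Fin M → K} (ha : a ≠ 0) :
    Nat.card (LinearMap.ker (linearizedMap p e a)) ≤ (p ^ e) ^ (M - 1) := by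
  have hq : 1 < p ^ e := Nat.one_lt_pow (by omega) (Fact.out : p.Prime).one_lt
  set P := linearizedPoly (p ^ e) a
  have hker : (LinearMap.ker (linearizedMap p e a) : Set K) ⊆ P.rootSet K := fun x hx => by
    rw [mem_rootSet_of_ne (linearizedPoly_ne_zero hq ha), coe_aeval_eq_eval,
      ← linearizedMap_eq_eval]
    exact hx
  calc Nat.card (LinearMap.ker (linearizedMap p e a))
      = (LinearMap.ker (linearizedMap p e a) : Set K).ncard := Nat.card_coe_set_eq _
    _ ≤ (P.rootSet K).ncard := Set.ncard_le_ncard hker (P.rootSet_finite K)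
    _ ≤ P.natDegree := P.ncard_rootSet_le K
    _ ≤ (p ^ e) ^ (M - 1) := natDegree_linearizedPoly_le a (by omega)

theorem finrank_ker_linearizedMap_le [Fintype K] (he : 1 ≤ e) {m : ℕ}
    (hcard : Fintype.card K = (p ^ e) ^ m) {M : ℕ} {a : Fin M → K} (ha : a ≠ 0) :
    finrank (Fqsub p e K) (LinearMap.ker (linearizedMap p e a)) ≤ M - 1 :=
  finrank_le_of_natCard_le (Nat.one_lt_pow (by omega) (Fact.out : p.Prime).one_lt)
    (card_Fqsub he hcard).ge (card_ker_linearizedMap_le he ha)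

end Fqsub

theorem gabidulin_rank_bound_and_min_rank_distance_general
    (p e m : ℕ) [Fact p.Prime] (hq : 1 ≤ e)
    (K : Type*) [Field K] [Fintype K] [CharP K p]
    (hcard : Fintype.card K = (p ^ e) ^ m)
    (N M : ℕ) (hMN : M ≤ N)
    (g : Fin N → K) (hg : LinearIndependent (Fqsub p e K) g) :
    (∀ a : Fin M → K, a ≠ 0 →
        N - M + 1 ≤ rankFq p e K (fun i => ∑ j, a j * g i ^ (p ^ e) ^ (j : ℕ))) ∧
    (∀ a a' : Fin M → K, a ≠ a' →
        N - M + 1 ≤ rankFq p e K (fun i =>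
          (∑ j, a j * g i ^ (p ^ e) ^ (j : ℕ)) - ∑ j, a' j * g i ^ (p ^ e) ^ (j : ℕ))) := by
  have rank_bound (a : Fin M → K) (ha : a ≠ 0) :
      N - M + 1 ≤ rankFq p e K (linearizedMap p e a ∘ g) := by
    obtain ⟨j, -⟩ := Function.ne_iff.mp ha
    have hM := j.pos
    have hker := finrank_ker_linearizedMap_le hq hcard ha
    have hrank := card_le_finrank_span_range_comp_add_finrank_ker (linearizedMap p e a) hg
    rw [Fintype.card_fin] at hrank
    unfold rankFq
    omega
  refine ⟨rank_bound, fun a a' hne => ?_⟩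
  have := rank_bound (a - a') (sub_ne_zero.mpr hne)
  rw [linearizedMap_sub] at this
  exact this

/-- For `g_1, …, g_N ∈ K` (a finite field with `q^m` elements, `m ≥ N`)
linearly independent over `F_q` and `1 ≤ M ≤ N`, every nonzero linearized polynomial `f`
of `q`-degree at most `M - 1` satisfies `rank_{F_q}(f(g_1), …, f(g_N)) ≥ N - M + 1`;
consequently the Gabidulin code `{(f(g_1), …, f(g_N))}` has minimum rank distance
at least `N - M + 1`. -/
theorem gabidulin_rank_bound_and_min_rank_distance
    (p e m : ℕ) [Fact p.Prime] (hq : 1 ≤ e)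
    (K : Type*) [Field K] [Fintype K] [CharP K p]
    (hcard : Fintype.card K = (p ^ e) ^ m)
    (N M : ℕ) (hM1 : 1 ≤ M) (hMN : M ≤ N) (hNm : N ≤ m)
    (g : Fin N → K) (hg : LinearIndependent (Fqsub p e K) g) :
    (∀ a : Fin M → K, a ≠ 0 →
        N - M + 1 ≤ rankFq p e K (fun i => ∑ j, a j * g i ^ (p ^ e) ^ (j : ℕ))) ∧
    (∀ a a' : Fin M → K, a ≠ a' →
        N - M + 1 ≤ rankFq p e K (fun i =>
          (∑ j, a j * g i ^ (p ^ e) ^ (j : ℕ)) - ∑ j, a' j * g i ^ (p ^ e) ^ (j : ℕ))) :=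
  gabidulin_rank_bound_and_min_rank_distance_general p e m hq K hcard N M hMN g hg
end

section
/- (Singleton bound for the rank metric) Let K be a finite field with q^m elements and let C be a K-linear subspace of K^N of dimension M ≥ 1 over K. Then there exists a nonzero codeword c ∈ C with rank_{F_q}(c) ≤ N − M + 1; in particular, the minimum rank distance D of C satisfies D ≤ N − M + 1. -/
/-!
A nonzero vector cannot span more than its number of nonzero coordinates, so the rank weight is
bounded by the Hamming weight and it suffices to prove the classical Singleton bound. For that,
the `M - 1` linear conditions "vanish on a fixed set `S` of `M - 1` coordinates" cut the
`M`-dimensional code down to a nonzero subspace, and a nonzero codeword there has at most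
`N - (M - 1)` nonzero coordinates.
-/

open Module Submodule Finset

theorem finrank_span_range_le_hammingNorm {F V ι : Type*} [DivisionRing F] [AddCommGroup V]
    [Module F V] [Fintype ι] [DecidableEq V] (v : ι → V) :
    finrank F (span F (Set.range v)) ≤ hammingNorm v := by
  let nonzeroValues : Finset V := ({i | v i ≠ 0} : Finset ι).image v
  have hsub : Set.range v \ {0} ⊆ nonzeroValues := by
    rintro _ ⟨⟨i, rfl⟩, hi⟩
    exact Finset.mem_image_of_mem v (by simpa using hi)
  calc finrank F (span F (Set.range v))
      = finrank F (span F (Set.range v \ {0})) := by rw [span_sdiff_singleton_zero]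
    _ ≤ finrank F (span F (nonzeroValues : Set V)) := Submodule.finrank_mono (span_mono hsub)
    _ ≤ #nonzeroValues := finrank_span_finset_le_card nonzeroValues
    _ ≤ hammingNorm v := Finset.card_image_le

theorem Submodule.exists_ne_zero_forall_mem_eq_zero {K ι : Type*} [DivisionRing K] [Fintype ι]
    (C : Submodule K (ι → K)) (S : Finset ι) (hS : #S < finrank K C) :
    ∃ c ∈ C, c ≠ 0 ∧ ∀ i ∈ S, c i = 0 := by
  let restrict : C →ₗ[K] (S → K) := (LinearMap.funLeft K K ((↑) : S → ι)).comp C.subtype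
  have hker : LinearMap.ker restrict ≠ ⊥ :=
    LinearMap.ker_ne_bot_of_finrank_lt (by simpa using hS)
  obtain ⟨c, hc, hc0⟩ := exists_mem_ne_zero_of_ne_bot hker
  exact ⟨c, c.2, by simpa using hc0, fun i hi => congrFun (LinearMap.mem_ker.1 hc) ⟨i, hi⟩⟩

theorem Submodule.exists_ne_zero_hammingNorm_le {K ι : Type*} [DivisionRing K] [Fintype ι]
    [DecidableEq K] (C : Submodule K (ι → K)) (hC : 0 < finrank K C) :
    ∃ c ∈ C, c ≠ 0 ∧ hammingNorm c ≤ Fintype.card ι - finrank K C + 1 := by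
  classical
  have hle : finrank K C ≤ Fintype.card ι := by simpa using C.finrank_le
  obtain ⟨S, -, hS⟩ := Finset.exists_subset_card_eq
    (show finrank K C - 1 ≤ #(univ : Finset ι) by rw [card_univ]; omega)
  obtain ⟨c, hcC, hc0, hcS⟩ := C.exists_ne_zero_forall_mem_eq_zero S (by omega)
  refine ⟨c, hcC, hc0, ?_⟩
  calc hammingNorm c ≤ #Sᶜ := Finset.card_le_card fun i hi => by
        simp only [Finset.mem_filter, Finset.mem_univ, true_and] at hi
        exact Finset.mem_compl.2 fun hiS => hi (hcS i hiS)
    _ = Fintype.card ι - finrank K C + 1 := by rw [Finset.card_compl, hS]; omega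

theorem singleton_bound_rank_metric_general
    (p e : ℕ) [Fact p.Prime]
    (K : Type*) [Field K] [CharP K p]
    (N M : ℕ) (hM : 1 ≤ M)
    (C : Submodule K (Fin N → K)) (hdim : Module.finrank K C = M) :
    ∃ c ∈ C, c ≠ 0 ∧ rankFq p e K c ≤ N - M + 1 := by
  classical
  obtain ⟨c, hcC, hc0, hc⟩ := C.exists_ne_zero_hammingNorm_le (hdim ▸ hM)
  refine ⟨c, hcC, hc0, (finrank_span_range_le_hammingNorm c).trans ?_⟩
  rwa [Fintype.card_fin, hdim] at hc

/-- Singleton bound for the rank metric. If `C ⊆ K^N` is a `K`-linear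
subspace of dimension `M ≥ 1` over `K` (where `K` is a finite field with `q^m` elements),
then there is a nonzero codeword `c ∈ C` with `rank_{F_q}(c) ≤ N - M + 1`; in particular
the minimum rank distance `D` of `C` satisfies `D ≤ N - M + 1`. -/
theorem singleton_bound_rank_metric
    (p e m : ℕ) [Fact p.Prime] (hq : 1 ≤ e)
    (K : Type*) [Field K] [Fintype K] [CharP K p]
    (hcard : Fintype.card K = (p ^ e) ^ m)
    (N M : ℕ) (hM : 1 ≤ M)
    (C : Submodule K (Fin N → K)) (hdim : Module.finrank K C = M) :
    ∃ c ∈ C, c ≠ 0 ∧ rankFq p e K c ≤ N - M + 1 :=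
  singleton_bound_rank_metric_general p e K N M hM C hdim
end
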